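/- arXiv:2305.10038 — 3 statements merged into one kernel-verified Lean document; each statement's English description precedes it below -/
import Mathlib

section
/- Let a ∈ (1/2, 2/3], p ∈ (0,1), and n ≥ 1 an integer. Define the operator P₂ on functions of bounded variation on [0, 1/(1−a)] by P₂f(x) = p·(f(a x + 1) − f(1)) + q·1{x ≥ 1/a}·(f(a x − 1) − f(0)). Then for every function f of bounded variation on [0, 1/(1−a)]: ‖P₂^n f‖ ≤ p^n · sup{(q/p)^{L_n(x)} : x ∈ [0, 1/(1−a)], κ_a(x) ≥ n} · ‖f‖, where ‖f‖ = |f(0)| + Var(f) and Var(f) is the total variation of f on [0, 1/(1−a)]. -/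
/-!
`P₂` is the transfer operator, corrected by constants, of the branches `y ↦ (y - 1)/a`
(weight `p`) and `y ↦ (y + 1)/a` (weight `q`) of `T_a`. Hence the variation of `P₂ g` on an
interval is at most `p` times that of `g` on the right preimage plus `q` times that on the left
preimage. Iterating, `Var(P₂ⁿ f)` is at most the sum over the `2ⁿ` branch words of `pⁿ (q/p)^ℓ`
times the variation of `f` on the `n`-fold preimage of `[0, 1/(1-a)]` along the word, `ℓ` counting
the left branches. These preimages do not overlap, so their variations add up to at most
`Var(f)`; and each nonempty one consists of points `x` with `κ_a(x) ≥ n` and `L_n(x) = ℓ`, so its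
weight is at most `pⁿ` times the supremum. Finally `P₂ⁿ f (0) = 0` for `n ≥ 1`, and the supremum
is at least `1` because `1/(1-a)` is a fixed point of `T_a` outside the hole.
-/

open MeasureTheory Filter Set ProbabilityTheory
open scoped ENNReal Classical Topology

noncomputable section

/-- The map `T_a` (extended to a total function; on the paper's domain it agrees with `T_a`,
and `T_{2/3}(1) = 0`). -/
def Tmap (a x : ℝ) : ℝ := if x < 1 then (x + 1) / a else (x - 1) / a

/-- `κ_a(x) ∈ ℕ∞`: the first entry time of the orbit of `x` under `T_a` into the hole
`I_a = ((2a-1)/(1-a), 1)`. -/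
def kappa (a x : ℝ) : ℕ∞ :=
  ⨅ (k : ℕ) (_ : (Tmap a)^[k] x ∈ Set.Ioo ((2 * a - 1) / (1 - a)) 1), (k : ℕ∞)

/-- `δ_k(x)` -/
def deltaF (a x : ℝ) (k : ℕ) : ℝ := if (Tmap a)^[k] x < 1 then 1 else 0

/-- `L_k(x)` -/
def Lnat (a x : ℝ) (k : ℕ) : ℕ :=
  ((Finset.range k).filter fun i => (Tmap a)^[i] x < 1).card

/-- the `k`-th term of the series `∑_{k=0}^{κ_a(x)} δ_k(x) (p/λ)^{k+1} (q/p)^{L_k(x)}` -/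
def lamTerm (a p x lam : ℝ) (k : ℕ) : ℝ :=
  if (k : ℕ∞) ≤ kappa a x then
    deltaF a x k * (p / lam) ^ (k + 1) * ((1 - p) / p) ^ (Lnat a x k)
  else 0

/-- `λ` is a positive solution of the equation defining `λ_a`. -/
def IsLamSol (a p lam : ℝ) : Prop := 0 < lam ∧ HasSum (lamTerm a p 0 lam) 1

/-- `V(x) = ∑_{k=0}^{κ_a} (p/λ_a)^k (q/p)^{L_k} 1{T_a^k(0) ≤ x}` -/
def Vfun (a p lam x : ℝ) : ℝ :=
  ∑' k : ℕ, if (k : ℕ∞) ≤ kappa a 0 ∧ (Tmap a)^[k] 0 ≤ x then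
    (p / lam) ^ k * ((1 - p) / p) ^ (Lnat a 0 k) else 0

/-- `F̄_a(y) = ∑_{k=0}^{κ_a(y)} δ_k(y) (p/λ_a)^{k+1} (q/p)^{L_k(y)}`. -/
def Fbar (a p lam y : ℝ) : ℝ := ∑' k, lamTerm a p y lam k

/-- The operator `P₂`. -/
def P2op (a p : ℝ) (f : ℝ → ℝ) : ℝ → ℝ := fun x =>
  p * (f (a * x + 1) - f 1) + (1 - p) * (if 1 / a ≤ x then f (a * x - 1) - f 0 else 0)

/-- The norm `‖f‖ = |f(0)| + Var(f)` on functions of bounded variation on `[0, 1/(1-a)]`. -/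
def BVnorm (a : ℝ) (f : ℝ → ℝ) : ℝ :=
  |f 0| + (eVariationOn f (Set.Icc (0 : ℝ) (1 / (1 - a)))).toReal

namespace eVariationOn

variable {α E : Type*} [LinearOrder α]

theorem add_le [SeminormedAddCommGroup E] (f g : α → E) (s : Set α) :
    eVariationOn (fun x => f x + g x) s ≤ eVariationOn f s + eVariationOn g s := by
  refine iSup_le fun ⟨n, u, hu, us⟩ => ?_
  calc ∑ i ∈ Finset.range n, edist (f (u (i + 1)) + g (u (i + 1))) (f (u i) + g (u i))
      ≤ ∑ i ∈ Finset.range n,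
          (edist (f (u (i + 1))) (f (u i)) + edist (g (u (i + 1))) (g (u i))) :=
        Finset.sum_le_sum fun i _ => edist_add_add_le _ _ _ _
    _ ≤ eVariationOn f s + eVariationOn g s := by
        rw [Finset.sum_add_distrib]
        exact add_le_add (sum_le hu us) (sum_le hu us)

theorem const_smul {𝕜 : Type*} [NormedField 𝕜] [SeminormedAddCommGroup E] [NormedSpace 𝕜 E]
    (c : 𝕜) (f : α → E) (s : Set α) :
    eVariationOn (fun x => c • f x) s = ‖c‖ₑ * eVariationOn f s := by
  simp only [eVariationOn, edist_smul₀, ENNReal.smul_def, smul_eq_mul, ← Finset.mul_sum,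
    ENNReal.mul_iSup]
  rfl

theorem sub_const [SeminormedAddCommGroup E] (f : α → E) (c : E) (s : Set α) :
    eVariationOn (fun x => f x - c) s = eVariationOn f s := by
  simp only [eVariationOn, edist_sub_right]

theorem comp_affine_Icc [PseudoEMetricSpace E] (f : ℝ → E) {a : ℝ} (ha : 0 < a)
    (b u v : ℝ) :
    eVariationOn (fun x => f (a * x + b)) (Icc u v) =
      eVariationOn f (Icc (a * u + b) (a * v + b)) := by
  rw [← Set.image_affine_Icc' ha]
  exact comp_eq_of_monotoneOn f _ fun x _ y _ hxy => by gcongr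

theorem ite_zero_le [PseudoEMetricSpace E] [Zero E] {g : α → E} {c : α} (hc : g c = 0)
    (u v : α) :
    eVariationOn (fun x => if c ≤ x then g x else 0) (Icc u v) ≤
      eVariationOn g (Icc (max u c) v) := by
  set F := fun x => if c ≤ x then g x else 0
  have hF : ∀ x ≤ c, F x = 0 := fun x hx => by
    rcases hx.lt_or_eq with hx | rfl
    · simp [F, not_le.2 hx]
    · simp [F, hc]
  have hleft : eVariationOn F (Icc u (max u c)) = 0 := by
    rcases le_total c u with hcu | huc
    · rw [max_eq_left hcu, Icc_self, eVariationOn.subsingleton _ subsingleton_singleton]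
    · rw [max_eq_right huc]
      refine constant_on ?_
      rintro _ ⟨x, hx, rfl⟩ _ ⟨y, hy, rfl⟩
      rw [hF x hx.2, hF y hy.2]
  rcases lt_or_ge v (max u c) with hv | hv
  · exact (mono F (Icc_subset_Icc_right hv.le)).trans (hleft.le.trans zero_le)
  have hright : EqOn F g (Icc (max u c) v) := fun x hx => if_pos (le_of_max_le_right hx.1)
  refine le_of_eq ?_
  calc eVariationOn F (Icc u v)
      = eVariationOn F (Icc u (max u c)) + eVariationOn F (Icc (max u c) v) := by
        simpa using (Icc_add_Icc F (s := univ) (le_max_left u c) hv (mem_univ _)).symm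
    _ = eVariationOn g (Icc (max u c) v) := by rw [hleft, zero_add, eq_of_eqOn hright]

theorem sum_le_biUnion [PseudoEMetricSpace E] (f : α → E) (s : ℕ → Set α) (n : ℕ)
    (hs : ∀ i j, i < j → j < n → ∀ x ∈ s i, ∀ y ∈ s j, x ≤ y) :
    ∑ i ∈ Finset.range n, eVariationOn f (s i) ≤
      eVariationOn f (⋃ i ∈ Finset.range n, s i) := by
  induction n with
  | zero => simp
  | succ n ih =>
    rw [Finset.sum_range_succ, Finset.range_add_one, Finset.set_biUnion_insert, union_comm]
    refine (add_le_add_left (ih fun i j hij hj => hs i j hij (by omega)) _).trans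
      (add_le_union f ?_)
    simp only [mem_iUnion, Finset.mem_range]
    rintro x ⟨i, hi, hx⟩ y hy
    exact hs i n hi n.lt_succ_self x hx y hy

end eVariationOn

/-! `preimageRight a J` and `preimageLeft a J` are the endpoints of the preimages of
`[J.1, J.2]` under the branches `y ↦ (y - 1)/a` on `[1, ∞)` and `y ↦ (y + 1)/a` on `[0, ∞)`
of `T_a`. -/

def preimageRight (a : ℝ) (J : ℝ × ℝ) : ℝ × ℝ := (a * J.1 + 1, a * J.2 + 1)

def preimageLeft (a : ℝ) (J : ℝ × ℝ) : ℝ × ℝ := (a * max J.1 (1 / a) - 1, a * J.2 - 1)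

theorem eVariationOn_P2op_le {a : ℝ} (ha : 0 < a) (p : ℝ) (g : ℝ → ℝ) (J : ℝ × ℝ) :
    eVariationOn (P2op a p g) (Icc J.1 J.2) ≤
      ‖p‖ₑ * eVariationOn g (Icc (preimageRight a J).1 (preimageRight a J).2) +
        ‖1 - p‖ₑ * eVariationOn g (Icc (preimageLeft a J).1 (preimageLeft a J).2) := by
  have hright := eVariationOn.const_smul p (fun x => g (a * x + 1) - g 1) (Icc J.1 J.2)
  have hleft := eVariationOn.const_smul (1 - p)
    (fun x => if 1 / a ≤ x then g (a * x - 1) - g 0 else 0) (Icc J.1 J.2)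
  simp only [smul_eq_mul] at hright hleft
  have hcut : eVariationOn (fun x => if 1 / a ≤ x then g (a * x - 1) - g 0 else 0) (Icc J.1 J.2)
      ≤ eVariationOn g (Icc (preimageLeft a J).1 (preimageLeft a J).2) := by
    refine (eVariationOn.ite_zero_le (by field_simp; simp) J.1 J.2).trans_eq ?_
    rw [eVariationOn.sub_const (fun x => g (a * x - 1))]
    simpa only [preimageLeft, sub_eq_add_neg] using eVariationOn.comp_affine_Icc g ha (-1) _ _
  calc eVariationOn (P2op a p g) (Icc J.1 J.2)
      ≤ _ := eVariationOn.add_le _ _ _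
    _ ≤ _ := by
      rw [hright, hleft, eVariationOn.sub_const (fun x => g (a * x + 1)),
        eVariationOn.comp_affine_Icc g ha]
      exact add_le_add le_rfl (mul_le_mul_right hcut _)

/-- The `2 ^ n` preimages of `I` under `T_a^n`, indexed by the branch words. For
`k < 2 ^ (n + 1)`, the branch applied first to `I` is encoded in the lower bits of `k` and the
last one, which decides the half `[0, (2a-1)/(1-a)]` or `[1, 1/(1-a)]` of the result, in the
top bit; so the intervals lie on the line in the order of their indices. -/
def iterPreimage (a : ℝ) (I : ℝ × ℝ) : ℕ → ℕ → ℝ × ℝ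
  | 0, _ => I
  | n + 1, k => if k < 2 ^ n then preimageLeft a (iterPreimage a I n k)
      else preimageRight a (iterPreimage a I n (k - 2 ^ n))

def leftCount : ℕ → ℕ → ℕ
  | 0, _ => 0
  | n + 1, k => if k < 2 ^ n then leftCount n k + 1 else leftCount n (k - 2 ^ n)

theorem iterPreimage_succ_of_lt {a : ℝ} {I : ℝ × ℝ} {n k : ℕ} (hk : k < 2 ^ n) :
    iterPreimage a I (n + 1) k = preimageLeft a (iterPreimage a I n k) := if_pos hk

theorem iterPreimage_succ_add (a : ℝ) (I : ℝ × ℝ) (n k : ℕ) :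
    iterPreimage a I (n + 1) (2 ^ n + k) = preimageRight a (iterPreimage a I n k) := by
  simp [iterPreimage]

theorem leftCount_succ_of_lt {n k : ℕ} (hk : k < 2 ^ n) :
    leftCount (n + 1) k = leftCount n k + 1 := if_pos hk

theorem leftCount_succ_add (n k : ℕ) : leftCount (n + 1) (2 ^ n + k) = leftCount n k := by
  simp [leftCount]

theorem eVariationOn_iterate_P2op_le {a p : ℝ} (ha : 0 < a) (hp₀ : 0 < p) (hp₁ : p ≤ 1)
    (I : ℝ × ℝ) (n : ℕ) (f : ℝ → ℝ) :
    eVariationOn ((P2op a p)^[n] f) (Icc I.1 I.2) ≤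
      ∑ k ∈ Finset.range (2 ^ n), ENNReal.ofReal (p ^ n * ((1 - p) / p) ^ leftCount n k) *
        eVariationOn f (Icc (iterPreimage a I n k).1 (iterPreimage a I n k).2) := by
  induction n generalizing f with
  | zero => simp [iterPreimage, leftCount]
  | succ n ih =>
    set r := (1 - p) / p
    have hqr : 1 - p = p * r := by simp only [r]; field_simp
    have hr : 0 ≤ r := by positivity
    rw [Function.iterate_succ_apply, pow_succ 2 n, mul_two, Finset.sum_range_add,
      ← Finset.sum_add_distrib]
    refine (ih (P2op a p f)).trans (Finset.sum_le_sum fun k hk => ?_)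
    rw [Finset.mem_range] at hk
    rw [iterPreimage_succ_of_lt hk, leftCount_succ_of_lt hk, iterPreimage_succ_add,
      leftCount_succ_add]
    refine (mul_le_mul_right (eVariationOn_P2op_le ha p f _) _).trans_eq ?_
    rw [Real.enorm_of_nonneg hp₀.le, Real.enorm_of_nonneg (sub_nonneg.2 hp₁), mul_add, add_comm,
      ← mul_assoc, ← mul_assoc, ← ENNReal.ofReal_mul (by positivity),
      ← ENNReal.ofReal_mul (by positivity), hqr]
    congr 3 <;> ring

section Orbit

variable {a y : ℝ} {n : ℕ}

theorem natCast_le_kappa_iff :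
    (n : ℕ∞) ≤ kappa a y ↔ ∀ j < n, (Tmap a)^[j] y ∉ Ioo ((2 * a - 1) / (1 - a)) 1 := by
  simp only [kappa, le_iInf₂_iff, Nat.cast_le]
  exact forall_congr' fun j => ⟨fun h hj hy => (h hy).not_gt hj, fun h hy => not_lt.1 (h · hy)⟩

theorem succ_le_kappa_iff :
    ((n + 1 : ℕ) : ℕ∞) ≤ kappa a y ↔
      y ∉ Ioo ((2 * a - 1) / (1 - a)) 1 ∧ (n : ℕ∞) ≤ kappa a (Tmap a y) := by
  simp only [natCast_le_kappa_iff, Nat.forall_lt_succ_left, Function.iterate_succ_apply,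
    Function.iterate_zero_apply]

theorem Lnat_succ : Lnat a y (n + 1) = Lnat a (Tmap a y) n + if y < 1 then 1 else 0 := by
  simp only [Lnat, Finset.card_filter, Finset.sum_range_succ', Function.iterate_succ_apply,
    Function.iterate_zero_apply]
  congr

theorem Lnat_le : Lnat a y n ≤ n :=
  (Finset.card_filter_le _ _).trans (Finset.card_range n).le

end Orbit

section Branches

variable {a y : ℝ} {J : ℝ × ℝ}

theorem two_mul_sub_one_div_one_sub_le_one (ha : a ≤ 2 / 3) : (2 * a - 1) / (1 - a) ≤ 1 := by
  rw [div_le_one (by linarith)]; linarith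

theorem preimageLeft_bounds (ha : a ∈ Ioo 0 1) (hJ : J.2 ≤ 1 / (1 - a)) :
    0 ≤ (preimageLeft a J).1 ∧ (preimageLeft a J).2 ≤ (2 * a - 1) / (1 - a) := by
  obtain ⟨ha₀, ha₁⟩ := ha
  have hb : a * (1 / (1 - a)) - 1 = (2 * a - 1) / (1 - a) := by
    field_simp [(by linarith : (1 - a) ≠ 0)]; ring
  have hmax : a * (1 / a) ≤ a * max J.1 (1 / a) := by gcongr; exact le_max_right _ _
  rw [mul_one_div_cancel ha₀.ne'] at hmax
  simp only [preimageLeft]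
  constructor
  · linarith
  · rw [← hb]; gcongr

theorem preimageRight_bounds (ha : a ∈ Ioo 0 1) (hJ₁ : 0 ≤ J.1)
    (hJ₂ : J.2 ≤ 1 / (1 - a)) :
    1 ≤ (preimageRight a J).1 ∧ (preimageRight a J).2 ≤ 1 / (1 - a) := by
  obtain ⟨ha₀, ha₁⟩ := ha
  have hb : a * (1 / (1 - a)) + 1 = 1 / (1 - a) := by
    field_simp [(by linarith : (1 - a) ≠ 0)]; ring
  simp only [preimageRight]
  constructor
  · nlinarith
  · rw [← hb]; gcongr

theorem Tmap_mem_of_mem_preimageRight (ha : 0 < a) (hJ : 0 ≤ J.1)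
    (hy : y ∈ Ico (preimageRight a J).1 (preimageRight a J).2) :
    1 ≤ y ∧ Tmap a y ∈ Ico J.1 J.2 := by
  obtain ⟨hy₁, hy₂⟩ := hy
  simp only [preimageRight] at hy₁ hy₂
  have h1y : 1 ≤ y := by nlinarith
  refine ⟨h1y, ?_, ?_⟩ <;> rw [Tmap, if_neg h1y.not_gt]
  · rw [le_div_iff₀ ha]; linarith
  · rw [div_lt_iff₀ ha]; linarith

theorem Tmap_mem_of_mem_preimageLeft (ha : a ∈ Ioc 0 (2 / 3)) (hJ : J.2 ≤ 1 / (1 - a))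
    (hy : y ∈ Ico (preimageLeft a J).1 (preimageLeft a J).2) :
    y < (2 * a - 1) / (1 - a) ∧ y < 1 ∧ Tmap a y ∈ Ico J.1 J.2 := by
  obtain ⟨ha₀, ha₁⟩ := ha
  have hyc := hy.2.trans_le (preimageLeft_bounds ⟨ha₀, by linarith⟩ hJ).2
  have hy1 := hyc.trans_le (two_mul_sub_one_div_one_sub_le_one ha₁)
  obtain ⟨hy₁, hy₂⟩ := hy
  simp only [preimageLeft] at hy₁ hy₂
  refine ⟨hyc, hy1, ?_, ?_⟩ <;> rw [Tmap, if_pos hy1]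
  · rw [le_div_iff₀ ha₀]; nlinarith [le_max_left J.1 (1 / a)]
  · rw [div_lt_iff₀ ha₀]; linarith

end Branches

section IterPreimage

variable {a : ℝ} {I : ℝ × ℝ}

theorem iterPreimage_bounds (ha : a ∈ Ioo 0 1) (hI₁ : 0 ≤ I.1) (hI₂ : I.2 ≤ 1 / (1 - a))
    (n k : ℕ) : 0 ≤ (iterPreimage a I n k).1 ∧ (iterPreimage a I n k).2 ≤ 1 / (1 - a) := by
  induction n generalizing k with
  | zero => exact ⟨hI₁, hI₂⟩
  | succ n ih =>
    rcases lt_or_ge k (2 ^ n) with hk | hk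
    · rw [iterPreimage_succ_of_lt hk]
      obtain ⟨h₁, h₂⟩ := preimageLeft_bounds ha (ih k).2
      refine ⟨h₁, h₂.trans ?_⟩
      gcongr <;> linarith [ha.2]
    · obtain ⟨m, rfl⟩ := Nat.exists_eq_add_of_le hk
      rw [iterPreimage_succ_add]
      obtain ⟨h₁, h₂⟩ := preimageRight_bounds ha (ih m).1 (ih m).2
      exact ⟨zero_le_one.trans h₁, h₂⟩

theorem iterPreimage_snd_le_fst (ha : a ∈ Ioc 0 (2 / 3)) (hI₁ : 0 ≤ I.1)
    (hI₂ : I.2 ≤ 1 / (1 - a)) {n k k' : ℕ} (hkk' : k < k') (hk' : k' < 2 ^ n) :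
    (iterPreimage a I n k).2 ≤ (iterPreimage a I n k').1 := by
  have ha' : a ∈ Ioo 0 1 := ⟨ha.1, by linarith [ha.2]⟩
  have hbd := iterPreimage_bounds ha' hI₁ hI₂
  induction n generalizing k k' with
  | zero => omega
  | succ n ih =>
    rcases lt_or_ge k' (2 ^ n) with hk'n | hk'n
    · rw [iterPreimage_succ_of_lt hk'n, iterPreimage_succ_of_lt (hkk'.trans hk'n)]
      have := (ih hkk' hk'n).trans (le_max_left _ (1 / a))
      simp only [preimageLeft]
      gcongr
      exact ha.1.le
    obtain ⟨m', rfl⟩ := Nat.exists_eq_add_of_le hk'n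
    rw [iterPreimage_succ_add]
    rcases lt_or_ge k (2 ^ n) with hkn | hkn
    · rw [iterPreimage_succ_of_lt hkn]
      calc _ ≤ (2 * a - 1) / (1 - a) := (preimageLeft_bounds ha' (hbd n k).2).2
        _ ≤ 1 := two_mul_sub_one_div_one_sub_le_one ha.2
        _ ≤ _ := (preimageRight_bounds ha' (hbd n m').1 (hbd n m').2).1
    · obtain ⟨m, rfl⟩ := Nat.exists_eq_add_of_le hkn
      rw [iterPreimage_succ_add]
      have := ih (k := m) (k' := m') (by omega) (by rw [pow_succ] at hk'; omega)
      simp only [preimageRight]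
      gcongr
      exact ha.1.le

theorem le_kappa_and_Lnat_eq_of_mem_iterPreimage (ha : a ∈ Ioc 0 (2 / 3)) (hI₁ : 0 ≤ I.1)
    (hI₂ : I.2 ≤ 1 / (1 - a)) {n k : ℕ} {y : ℝ}
    (hy : y ∈ Ico (iterPreimage a I n k).1 (iterPreimage a I n k).2) :
    (n : ℕ∞) ≤ kappa a y ∧ Lnat a y n = leftCount n k := by
  have hbd := iterPreimage_bounds ⟨ha.1, by linarith [ha.2]⟩ hI₁ hI₂
  induction n generalizing k y with
  | zero => simp [Lnat, leftCount]
  | succ n ih =>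
    rw [succ_le_kappa_iff, Lnat_succ]
    rcases lt_or_ge k (2 ^ n) with hk | hk
    · rw [iterPreimage_succ_of_lt hk] at hy
      obtain ⟨hyc, hy1, hTy⟩ := Tmap_mem_of_mem_preimageLeft ha (hbd n k).2 hy
      obtain ⟨hκ, hL⟩ := ih hTy
      refine ⟨⟨fun h => hyc.not_gt h.1, hκ⟩, ?_⟩
      rw [hL, if_pos hy1, leftCount_succ_of_lt hk]
    · obtain ⟨m, rfl⟩ := Nat.exists_eq_add_of_le hk
      rw [iterPreimage_succ_add] at hy
      obtain ⟨h1y, hTy⟩ := Tmap_mem_of_mem_preimageRight ha.1 (hbd n m).1 hy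
      obtain ⟨hκ, hL⟩ := ih hTy
      refine ⟨⟨fun h => h1y.not_gt h.2, hκ⟩, ?_⟩
      rw [hL, if_neg h1y.not_gt, add_zero, leftCount_succ_add]

theorem sum_eVariationOn_iterPreimage_le {E : Type*} [PseudoEMetricSpace E]
    (ha : a ∈ Ioc 0 (2 / 3)) (hI₁ : 0 ≤ I.1) (hI₂ : I.2 ≤ 1 / (1 - a)) (f : ℝ → E)
    (n : ℕ) :
    ∑ k ∈ Finset.range (2 ^ n),
        eVariationOn f (Icc (iterPreimage a I n k).1 (iterPreimage a I n k).2) ≤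
      eVariationOn f (Icc 0 (1 / (1 - a))) := by
  have hbd := iterPreimage_bounds ⟨ha.1, by linarith [ha.2]⟩ hI₁ hI₂ n
  refine (eVariationOn.sum_le_biUnion f _ _ fun i j hij hj x hx y hy =>
    hx.2.trans ((iterPreimage_snd_le_fst ha hI₁ hI₂ hij hj).trans hy.1)).trans ?_
  exact eVariationOn.mono f (iUnion₂_subset fun k _ => Icc_subset_Icc (hbd k).1 (hbd k).2)

end IterPreimage

def supWeight (a p : ℝ) (n : ℕ) : ℝ :=
  sSup {r : ℝ | ∃ x ∈ Icc (0 : ℝ) (1 / (1 - a)),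
    (n : ℕ∞) ≤ kappa a x ∧ r = ((1 - p) / p) ^ Lnat a x n}

section SupWeight

variable {a p : ℝ} {n : ℕ}

theorem pow_Lnat_le_supWeight (hp : p ∈ Ioo 0 1) {x : ℝ} (hx : x ∈ Icc 0 (1 / (1 - a)))
    (hκ : (n : ℕ∞) ≤ kappa a x) : ((1 - p) / p) ^ Lnat a x n ≤ supWeight a p n := by
  have hr : 0 ≤ (1 - p) / p := div_nonneg (by linarith [hp.2]) hp.1.le
  refine le_csSup ⟨max 1 ((1 - p) / p) ^ n, ?_⟩ ⟨x, hx, hκ, rfl⟩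
  rintro _ ⟨y, -, -, rfl⟩
  exact (pow_le_pow_left₀ hr (le_max_right _ _) _).trans
    (pow_le_pow_right₀ (le_max_left _ _) Lnat_le)

theorem one_le_supWeight (ha : a ∈ Ioo 0 1) (hp : p ∈ Ioo 0 1) : 1 ≤ supWeight a p n := by
  obtain ⟨ha₀, ha₁⟩ := ha
  have hb : 1 ≤ 1 / (1 - a) := by rw [le_div_iff₀ (by linarith)]; linarith
  have hfix : ∀ j, (Tmap a)^[j] (1 / (1 - a)) = 1 / (1 - a) := by
    refine Function.iterate_fixed ?_
    rw [Tmap, if_neg hb.not_gt, div_eq_iff ha₀.ne']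
    field_simp [(by linarith : (1 - a) ≠ 0)]
    ring
  have hL : Lnat a (1 / (1 - a)) n = 0 :=
    Finset.card_eq_zero.2 (Finset.filter_eq_empty_iff.2 fun j _ => by rw [hfix]; exact hb.not_gt)
  have hκ : (n : ℕ∞) ≤ kappa a (1 / (1 - a)) :=
    natCast_le_kappa_iff.2 fun j _ h => (hfix j ▸ h).2.not_ge hb
  have := pow_Lnat_le_supWeight hp ⟨zero_le_one.trans hb, le_rfl⟩ hκ
  rwa [hL, pow_zero] at this

theorem pow_leftCount_le_supWeight (ha : a ∈ Ioc 0 (2 / 3)) (hp : p ∈ Ioo 0 1) {k : ℕ}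
    (hk : (iterPreimage a (0, 1 / (1 - a)) n k).1 < (iterPreimage a (0, 1 / (1 - a)) n k).2) :
    ((1 - p) / p) ^ leftCount n k ≤ supWeight a p n := by
  obtain ⟨hκ, hL⟩ :=
    le_kappa_and_Lnat_eq_of_mem_iterPreimage ha le_rfl le_rfl (left_mem_Ico.2 hk)
  have hx := iterPreimage_bounds (I := (0, 1 / (1 - a))) ⟨ha.1, by linarith [ha.2]⟩
    le_rfl le_rfl n k
  exact hL ▸ pow_Lnat_le_supWeight hp ⟨hx.1, hk.le.trans hx.2⟩ hκ

end SupWeight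

theorem eVariationOn_iterate_P2op_le_supWeight {a p : ℝ} (ha : a ∈ Ioc 0 (2 / 3))
    (hp : p ∈ Ioo 0 1) (n : ℕ) (f : ℝ → ℝ) :
    eVariationOn ((P2op a p)^[n] f) (Icc 0 (1 / (1 - a))) ≤
      ENNReal.ofReal (p ^ n * supWeight a p n) * eVariationOn f (Icc 0 (1 / (1 - a))) := by
  set J := iterPreimage a (0, 1 / (1 - a)) n
  have hterm : ∀ k, ENNReal.ofReal (p ^ n * ((1 - p) / p) ^ leftCount n k) *
      eVariationOn f (Icc (J k).1 (J k).2) ≤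
      ENNReal.ofReal (p ^ n * supWeight a p n) * eVariationOn f (Icc (J k).1 (J k).2) := by
    intro k
    rcases lt_or_ge (J k).1 (J k).2 with hne | hempty
    · exact mul_le_mul_left (ENNReal.ofReal_le_ofReal (mul_le_mul_of_nonneg_left
        (pow_leftCount_le_supWeight ha hp hne) (pow_nonneg hp.1.le n))) _
    · rw [eVariationOn.subsingleton f (subsingleton_Icc_of_ge hempty), mul_zero, mul_zero]
  calc eVariationOn ((P2op a p)^[n] f) (Icc 0 (1 / (1 - a)))
      ≤ _ := eVariationOn_iterate_P2op_le ha.1 hp.1 hp.2.le (0, 1 / (1 - a)) n f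
    _ ≤ _ := Finset.sum_le_sum fun k _ => hterm k
    _ ≤ _ := by
      rw [← Finset.mul_sum]
      exact mul_le_mul_right (sum_eVariationOn_iterPreimage_le ha le_rfl le_rfl f n) _

theorem P2op_apply_zero {a : ℝ} (ha : 0 < a) (p : ℝ) (g : ℝ → ℝ) : P2op a p g 0 = 0 := by
  simp [P2op, ha]

theorem P2_iterate_norm_bound_general
    (a p : ℝ) (ha : a ∈ Set.Ioc (1/2 : ℝ) (2/3)) (hp : p ∈ Set.Ioo (0 : ℝ) 1)
    (n : ℕ)
    (f : ℝ → ℝ) (hf : BoundedVariationOn f (Set.Icc (0 : ℝ) (1 / (1 - a)))) :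
    BVnorm a ((P2op a p)^[n] f)
      ≤ p ^ n *
          sSup {r : ℝ | ∃ x ∈ Set.Icc (0 : ℝ) (1 / (1 - a)),
            (n : ℕ∞) ≤ kappa a x ∧ r = ((1 - p) / p) ^ (Lnat a x n)} *
          BVnorm a f := by
  change _ ≤ p ^ n * supWeight a p n * _
  have ha' : a ∈ Ioc 0 (2 / 3) := ⟨by linarith [ha.1], ha.2⟩
  have hM := one_le_supWeight (n := n) ⟨ha'.1, by linarith [ha.2]⟩ hp
  have hpM := mul_nonneg (pow_nonneg hp.1.le n) (zero_le_one.trans hM)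
  have hvar := ENNReal.toReal_mono (ENNReal.mul_ne_top ENNReal.ofReal_ne_top hf)
    (eVariationOn_iterate_P2op_le_supWeight ha' hp n f)
  rw [ENNReal.toReal_mul, ENNReal.toReal_ofReal hpM] at hvar
  have hzero : |(P2op a p)^[n] f 0| ≤ p ^ n * supWeight a p n * |f 0| := by
    cases n with
    | zero =>
      rw [Function.iterate_zero_apply, pow_zero, one_mul]
      exact le_mul_of_one_le_left (abs_nonneg _) hM
    | succ m =>
      rw [Function.iterate_succ_apply', P2op_apply_zero ha'.1, abs_zero]
      exact mul_nonneg hpM (abs_nonneg _)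
  rw [BVnorm, BVnorm, mul_add]
  exact add_le_add hzero hvar

theorem P2_iterate_norm_bound
    (a p : ℝ) (ha : a ∈ Set.Ioc (1/2 : ℝ) (2/3)) (hp : p ∈ Set.Ioo (0 : ℝ) 1)
    (n : ℕ) (hn : 1 ≤ n)
    (f : ℝ → ℝ) (hf : BoundedVariationOn f (Set.Icc (0 : ℝ) (1 / (1 - a)))) :
    BVnorm a ((P2op a p)^[n] f)
      ≤ p ^ n *
          sSup {r : ℝ | ∃ x ∈ Set.Icc (0 : ℝ) (1 / (1 - a)),
            (n : ℕ∞) ≤ kappa a x ∧ r = ((1 - p) / p) ^ (Lnat a x n)} *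
          BVnorm a f :=
  P2_iterate_norm_bound_general a p ha hp n f hf

end
end

section
/- Let a ∈ (0, 2/3), p ∈ (0,1), and x ∈ [0, 1/(1−a)]. Then for every n ≥ 1, almost surely on the event {τ_x > n}: for every 0 ≤ k ≤ n the iterate T_a^k(X_n^x) is defined (the first k points of the orbit of X_n^x under T_a remain in the domain of T_a) and X_{n−k}^x = T_a^k(X_n^x). In particular, the killed chain is deterministic in reversed time. -/
/-!
Almost surely every increment is `±1`. As long as the chain stays nonnegative it also stays in
`[0, 1/(1-a)]`, and then `a y + 1 ≥ 1` while `a y - 1 ≤ (2a-1)/(1-a) < 1` (this is where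
`a < 2/3` enters). So the position `X_{m+1}` alone tells which increment occurred, and `T_a`
recovers `X_m` from it; iterating this backwards from time `n` gives the claim.
-/

open MeasureTheory Filter Set ProbabilityTheory
open scoped ENNReal Classical Topology

noncomputable section

/-- The domain of `T_a`; the paper's extra condition `x < 1` on the first piece is automatic
for `a < 2/3`. -/
def TmapDomain (a : ℝ) : Set ℝ :=
  Icc 0 ((2 * a - 1) / (1 - a)) ∪ Icc 1 (1 / (1 - a))

theorem ae_eq_or_eq_of_measure_eq {Ω β : Type*} [MeasurableSpace Ω] [MeasurableSpace β]
    [MeasurableSingletonClass β] {μ : Measure Ω} [IsProbabilityMeasure μ] {f : Ω → β}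
    (hf : Measurable f) {u v : β} (huv : u ≠ v) {p : ℝ}
    (hu : μ {ω | f ω = u} = ENNReal.ofReal p) (hv : μ {ω | f ω = v} = ENNReal.ofReal (1 - p)) :
    ∀ᵐ ω ∂μ, f ω = u ∨ f ω = v := by
  have hU : MeasurableSet {ω | f ω = u} := hf (measurableSet_singleton u)
  have hV : MeasurableSet {ω | f ω = v} := hf (measurableSet_singleton v)
  have hdisj : Disjoint {ω | f ω = u} {ω | f ω = v} :=
    Set.disjoint_left.mpr fun ω (h₁ : f ω = u) (h₂ : f ω = v) => huv (h₁.symm.trans h₂)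
  have hfull : μ ({ω | f ω = u} ∪ {ω | f ω = v}) = 1 := by
    refine le_antisymm prob_le_one ?_
    calc (1 : ℝ≥0∞) = ENNReal.ofReal (p + (1 - p)) := by simp
      _ ≤ ENNReal.ofReal p + ENNReal.ofReal (1 - p) := ENNReal.ofReal_add_le
      _ = μ ({ω | f ω = u} ∪ {ω | f ω = v}) := by rw [measure_union hdisj hV, hu, hv]
  exact ae_iff.mpr ((prob_compl_eq_zero_iff (hU.union hV)).mpr hfull)

section ARStep

variable {a y e : ℝ}

theorem mul_add_mem_Icc_of_mem_Icc (ha : 0 ≤ a) (ha1 : a < 1) (hy : y ∈ Icc 0 (1 / (1 - a)))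
    (he : e ≤ 1) (hpos : 0 ≤ a * y + e) : a * y + e ∈ Icc 0 (1 / (1 - a)) := by
  refine ⟨hpos, ?_⟩
  have h1a : 1 - a ≠ 0 := by linarith
  have hfix : a * (1 / (1 - a)) + 1 = 1 / (1 - a) := by field_simp; ring
  nlinarith [hy.2]

theorem Tmap_mul_add_eq (ha : 0 < a) (ha23 : a < 2 / 3) (hy : y ∈ Icc 0 (1 / (1 - a)))
    (he : e = 1 ∨ e = -1) (hpos : 0 ≤ a * y + e) :
    a * y + e ∈ TmapDomain a ∧ Tmap a (a * y + e) = y := by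
  have h1a : 0 < 1 - a := by linarith
  have hay : a * y ≤ a * (1 / (1 - a)) := mul_le_mul_of_nonneg_left hy.2 ha.le
  rcases he with rfl | rfl
  · have hge : 1 ≤ a * y + 1 := by nlinarith [hy.1]
    have hfix : a * (1 / (1 - a)) + 1 = 1 / (1 - a) := by field_simp; ring
    refine ⟨Or.inr ⟨hge, by linarith⟩, ?_⟩
    rw [Tmap, if_neg (not_lt.mpr hge)]
    field_simp
    ring
  · have hhole : (2 * a - 1) / (1 - a) < 1 := by rw [div_lt_one h1a]; linarith
    have hfix : a * (1 / (1 - a)) - 1 = (2 * a - 1) / (1 - a) := by field_simp; ring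
    have hle : a * y + -1 ≤ (2 * a - 1) / (1 - a) := by linarith
    refine ⟨Or.inl ⟨hpos, hle⟩, ?_⟩
    rw [Tmap, if_pos (hle.trans_lt hhole)]
    field_simp
    ring

end ARStep

theorem iterate_apply_eq_of_apply_succ_eq {α : Type*} {f : α → α} {s : ℕ → α} {n : ℕ}
    (h : ∀ m < n, f (s (m + 1)) = s m) : ∀ k ≤ n, f^[k] (s n) = s (n - k) := by
  intro k hk
  induction k with
  | zero => rfl
  | succ k ih =>
    rw [Function.iterate_succ_apply', ih (by omega), ← h (n - (k + 1)) (by omega)]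
    congr 2
    omega

theorem iterate_mem_of_apply_succ_eq {α : Type*} {f : α → α} {D : Set α} {s : ℕ → α} {n : ℕ}
    (h : ∀ m < n, s (m + 1) ∈ D ∧ f (s (m + 1)) = s m) :
    ∀ k ≤ n, (∀ j < k, f^[j] (s n) ∈ D) ∧ s (n - k) = f^[k] (s n) := by
  have horbit := iterate_apply_eq_of_apply_succ_eq fun m hm => (h m hm).2
  refine fun k hk => ⟨fun j hj => ?_, (horbit k hk).symm⟩
  rw [horbit j (by omega), show n - j = (n - j - 1) + 1 by omega]
  exact (h _ (by omega)).1

theorem deterministic_in_reversed_time_general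
    {Ω : Type*} [MeasurableSpace Ω] (μ : Measure Ω) [IsProbabilityMeasure μ]
    (a p : ℝ) (ha : a ∈ Set.Ioo (0 : ℝ) (2/3))
    (ξ : ℕ → Ω → ℝ) (hmeas : ∀ n, Measurable (ξ n))
    (hdist1 : ∀ n, μ {ω | ξ n ω = 1} = ENNReal.ofReal p)
    (hdist2 : ∀ n, μ {ω | ξ n ω = -1} = ENNReal.ofReal (1 - p))
    (X : ℝ → ℕ → Ω → ℝ)
    (hX0 : ∀ x ω, X x 0 ω = x)
    (hXrec : ∀ x n ω, X x (n + 1) ω = a * X x n ω + ξ (n + 1) ω)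
    (x : ℝ) (hx : x ∈ Set.Icc (0 : ℝ) (1 / (1 - a))) :
    ∀ n : ℕ, 1 ≤ n →
      ∀ᵐ ω ∂μ, (∀ k ≤ n, 0 ≤ X x k ω) →
        ∀ k ≤ n,
          (∀ j < k, (Tmap a)^[j] (X x n ω) ∈
            Set.Icc (0 : ℝ) ((2 * a - 1) / (1 - a)) ∪ Set.Icc (1 : ℝ) (1 / (1 - a))) ∧
          X x (n - k) ω = (Tmap a)^[k] (X x n ω) := by
  intro n _
  have hsigns : ∀ᵐ ω ∂μ, ∀ j, ξ j ω = 1 ∨ ξ j ω = -1 := ae_all_iff.mpr fun j =>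
    ae_eq_or_eq_of_measure_eq (hmeas j) (by norm_num) (hdist1 j) (hdist2 j)
  filter_upwards [hsigns] with ω hξ hpos
  have hbound : ∀ m ≤ n, X x m ω ∈ Icc 0 (1 / (1 - a)) := by
    intro m hm
    induction m with
    | zero => rwa [hX0]
    | succ m ih =>
      have hstep := hpos (m + 1) hm
      rw [hXrec] at hstep ⊢
      exact mul_add_mem_Icc_of_mem_Icc ha.1.le (by linarith [ha.2]) (ih (by omega))
        (by rcases hξ (m + 1) with h | h <;> norm_num [h]) hstep
  refine iterate_mem_of_apply_succ_eq (f := Tmap a) (D := TmapDomain a)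
    (s := fun m => X x m ω) fun m hm => ?_
  have hstep := hpos (m + 1) hm
  rw [hXrec] at hstep ⊢
  exact Tmap_mul_add_eq ha.1 ha.2 (hbound m hm.le) (hξ (m + 1)) hstep

theorem deterministic_in_reversed_time
    {Ω : Type*} [MeasurableSpace Ω] (μ : Measure Ω) [IsProbabilityMeasure μ]
    (a p : ℝ) (ha : a ∈ Set.Ioo (0 : ℝ) (2/3)) (hp : p ∈ Set.Ioo (0 : ℝ) 1)
    (ξ : ℕ → Ω → ℝ) (hmeas : ∀ n, Measurable (ξ n))
    (hindep : iIndepFun ξ μ)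
    (hdist1 : ∀ n, μ {ω | ξ n ω = 1} = ENNReal.ofReal p)
    (hdist2 : ∀ n, μ {ω | ξ n ω = -1} = ENNReal.ofReal (1 - p))
    (X : ℝ → ℕ → Ω → ℝ)
    (hX0 : ∀ x ω, X x 0 ω = x)
    (hXrec : ∀ x n ω, X x (n + 1) ω = a * X x n ω + ξ (n + 1) ω)
    (x : ℝ) (hx : x ∈ Set.Icc (0 : ℝ) (1 / (1 - a))) :
    ∀ n : ℕ, 1 ≤ n →
      ∀ᵐ ω ∂μ, (∀ k ≤ n, 0 ≤ X x k ω) →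
        ∀ k ≤ n,
          (∀ j < k, (Tmap a)^[j] (X x n ω) ∈
            Set.Icc (0 : ℝ) ((2 * a - 1) / (1 - a)) ∪ Set.Icc (1 : ℝ) (1 / (1 - a))) ∧
          X x (n - k) ω = (Tmap a)^[k] (X x n ω) :=
  deterministic_in_reversed_time_general μ a p ha ξ hmeas hdist1 hdist2 X hX0 hXrec x hx

end
end

section
/- Let a ∈ [1/2, 2/3] and let k ≥ 1 be an integer with k < κ_a + 1 (for a = 2/3 this is every k ≥ 1, since T_{2/3} is defined on all of [0,3]). Then T_a^k(0) = −∑_{i=0}^{k−1} (−1)^{δ_i} a^{i−k}. Consequently, for a = 2/3 one has T_{2/3}^k(0) ≠ 1 for every integer k ≥ 1, i.e. the orbit of zero under T_{2/3} never hits 1. -/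
open MeasureTheory Filter Set ProbabilityTheory
open scoped ENNReal Classical Topology

noncomputable section

lemma orbit_eq (a : ℝ) (ha : a ≠ 0) (k : ℕ) :
    (Tmap a)^[k] 0
      = -∑ i ∈ Finset.range k,
          (if (Tmap a)^[i] 0 < 1 then (-1 : ℝ) else 1) * a ^ ((i : ℤ) - (k : ℤ)) := by
  induction k with
  | zero => simp
  | succ k ih =>
    have hdiv : (∑ i ∈ Finset.range k,
        (if (Tmap a)^[i] 0 < 1 then (-1 : ℝ) else 1) * a ^ ((i : ℤ) - (k : ℤ))) / a
        = ∑ i ∈ Finset.range k,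
          (if (Tmap a)^[i] 0 < 1 then (-1 : ℝ) else 1) * a ^ ((i : ℤ) - ((k : ℕ) + 1 : ℕ)) := by
      rw [Finset.sum_div]
      refine Finset.sum_congr rfl fun i _ => ?_
      have : ((i : ℤ) - ((k : ℕ) + 1 : ℕ)) = ((i : ℤ) - (k : ℤ)) + (-1) := by push_cast; ring
      rw [this, zpow_add₀ ha, zpow_neg_one]
      field_simp
    rw [Function.iterate_succ_apply', Finset.sum_range_succ, Tmap]
    by_cases h : (Tmap a)^[k] 0 < 1
    · rw [if_pos h, if_pos h, ih]
      rw [neg_add, ← hdiv]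
      have : ((k : ℤ) - ((k : ℕ) + 1 : ℕ)) = -1 := by push_cast; ring
      rw [this, zpow_neg_one]
      field_simp
    · rw [if_neg h, if_neg h, ih]
      rw [neg_add, ← hdiv]
      have : ((k : ℤ) - ((k : ℕ) + 1 : ℕ)) = -1 := by push_cast; ring
      rw [this, zpow_neg_one]
      field_simp
      ring

lemma two_pow_mul (k : ℕ) (hk : 1 ≤ k) :
    ∃ m : ℤ, (2:ℝ) ^ k * (Tmap (2/3))^[k] 0 = 3 * m := by
  induction k with
  | zero => omega
  | succ k ih =>
    rcases Nat.eq_zero_or_pos k with hk0 | hk1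
    · subst hk0
      refine ⟨1, ?_⟩
      simp [Tmap]
      norm_num
    · obtain ⟨m, hm⟩ := ih hk1
      rw [Function.iterate_succ_apply', Tmap]
      by_cases h : (Tmap (2/3))^[k] 0 < 1
      · refine ⟨3 * m + 2 ^ k, ?_⟩
        rw [if_pos h]
        push_cast
        have : (2:ℝ) ^ (k+1) * (((Tmap (2/3))^[k] 0 + 1) / (2/3))
            = 3 * ((2:ℝ)^k * (Tmap (2/3))^[k] 0 + 2^k) := by ring
        rw [this, hm]
      · refine ⟨3 * m - 2 ^ k, ?_⟩
        rw [if_neg h]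
        push_cast
        have : (2:ℝ) ^ (k+1) * (((Tmap (2/3))^[k] 0 - 1) / (2/3))
            = 3 * ((2:ℝ)^k * (Tmap (2/3))^[k] 0 - 2^k) := by ring
        rw [this, hm]

theorem orbit_identity_and_no_hit_of_one
    (a : ℝ) (ha : a ∈ Set.Icc (1/2 : ℝ) (2/3)) :
    (∀ k : ℕ, 1 ≤ k → (k : ℕ∞) ≤ kappa a 0 →
      (Tmap a)^[k] 0
        = -∑ i ∈ Finset.range k,
            (if (Tmap a)^[i] 0 < 1 then (-1 : ℝ) else 1) * a ^ ((i : ℤ) - (k : ℤ))) ∧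
    (a = 2/3 → ∀ k : ℕ, 1 ≤ k → (Tmap (2/3))^[k] 0 ≠ 1) := by
  have ha0 : a ≠ 0 := by
    have := ha.1; intro h; rw [h] at this; norm_num at this
  constructor
  · intro k _ _
    exact orbit_eq a ha0 k
  · intro _ k hk hcontra
    obtain ⟨m, hm⟩ := two_pow_mul k hk
    rw [hcontra, mul_one] at hm
    have hz : (2:ℤ) ^ k = 3 * m := by exact_mod_cast hm
    have h3 : (3:ℤ) ∣ 2 ^ k := ⟨m, hz⟩
    have := Int.Prime.dvd_pow' (by norm_num) h3
    norm_num at this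


end
end
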